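/- Let T be a (d₁,d₂)-biregular tree with d₁,d₂ ≥ 3 and Γ ≤ Aut(T) a tree lattice. Fix a base vertex o ∈ VQ and define the Markov kernel P̂ on VQ by P̂(v,w) = (Σ_{e ∈ EQ : ∂₀e = v, ∂₁e = w} ind(e)) / deg(v). Then the function μ(w) := deg(w)·N_o(w)⁻¹ defines a reversible measure for P̂ (i.e. μ(v)P̂(v,w) = μ(w)P̂(w,v) for all v,w ∈ VQ) which is stationary and has finite total mass; in particular, the Markov chain with kernel P̂ is positive recurrent. -/

import Mathlib

open Filter Topology MeasureTheory

attribute [local instance] Classical.propDecidable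

namespace TreeDyn


variable {V : Type*}

/-- The type of directed edges of a simple graph. -/
def DEdge (T : SimpleGraph V) : Type _ := {p : V × V // T.Adj p.1 p.2}

/-- `T` is a `(d₁,d₂)`-biregular tree: a tree whose vertex set admits a bipartition such
that every vertex of one class has degree `d₁` and every vertex of the other class has
degree `d₂`. -/
def IsBiregularTree (T : SimpleGraph V) (d₁ d₂ : ℕ) : Prop :=
  T.Connected ∧ T.IsAcyclic ∧
    ∃ c : V → Bool,
      (∀ u v, T.Adj u v → c u ≠ c v) ∧
      (∀ v, c v = true → Nat.card (T.neighborSet v) = d₁) ∧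
      (∀ v, c v = false → Nat.card (T.neighborSet v) = d₂)

/-- A permutation of the vertices is an automorphism of `T` acting without edge
inversion if it preserves adjacency and moves every vertex an even distance. -/
def IsTreeAut (T : SimpleGraph V) (σ : Equiv.Perm V) : Prop :=
  (∀ u v, T.Adj (σ u) (σ v) ↔ T.Adj u v) ∧ ∀ v, Even (T.dist v (σ v))

variable (T : SimpleGraph V) (Λ : Subgroup (Equiv.Perm V))

/-- Two vertices are related if they lie in the same `Λ`-orbit. -/
def vrel (u v : V) : Prop := ∃ γ ∈ Λ, γ u = v

/-- The vertex set of the quotient graph `Q = Λ∖T`. -/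
def VQ := Quot (vrel Λ)

/-- Projection of vertices to the quotient graph. -/
def πV : V → VQ Λ := Quot.mk _

/-- Two directed edges are related if they lie in the same `Λ`-orbit. -/
def erel (e f : DEdge T) : Prop :=
  ∃ γ ∈ Λ, γ e.1.1 = f.1.1 ∧ γ e.1.2 = f.1.2

/-- The directed edge set of the quotient graph `Q = Λ∖T`. -/
def EQ := Quot (erel T Λ)

/-- Projection of directed edges to the quotient graph. -/
def πE : DEdge T → EQ T Λ := Quot.mk _

/-- The initial vertex `∂₀ e` of a quotient edge. -/
noncomputable def tailQ (e : EQ T Λ) : VQ Λ := πV Λ (Quot.out e).1.1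

/-- The terminal vertex `∂₁ e` of a quotient edge. -/
noncomputable def headQ (e : EQ T Λ) : VQ Λ := πV Λ (Quot.out e).1.2

/-- The reversal `ē` of a quotient edge. -/
noncomputable def barQ (e : EQ T Λ) : EQ T Λ :=
  πE T Λ ⟨((Quot.out e).1.2, (Quot.out e).1.1), (Quot.out e).2.symm⟩

/-- The order of the stabilizer of a vertex in `Λ`. -/
noncomputable def stabV (v : V) : ℕ :=
  Nat.card {γ : Λ // (γ : Equiv.Perm V) v = v}

/-- The order of the pointwise stabilizer of a directed edge in `Λ`. -/
noncomputable def stabE (e : DEdge T) : ℕ :=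
  Nat.card {γ : Λ // (γ : Equiv.Perm V) e.1.1 = e.1.1 ∧ (γ : Equiv.Perm V) e.1.2 = e.1.2}

/-- The index map of the edge-indexed graph: `ind e = [Λ_{∂₀ẽ} : Λ_ẽ]` for any lift `ẽ`. -/
noncomputable def indQ (e : EQ T Λ) : ℕ :=
  stabV Λ (Quot.out e).1.1 / stabE T Λ (Quot.out e)

/-- The degree of a vertex of the quotient graph: the degree in `T` of any of its lifts. -/
noncomputable def degQ (v : VQ Λ) : ℕ := Nat.card (T.neighborSet (Quot.out v))

/-- `Δ(e) = ind(ē)/ind(e)`. -/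
noncomputable def deltaQ (e : EQ T Λ) : ℝ :=
  (indQ T Λ (barQ T Λ e) : ℝ) / (indQ T Λ e : ℝ)

/-- `Λ` is a tree lattice: a discrete subgroup (finite vertex stabilizers) of `Aut T`
with finite covolume, i.e. `Σ_{v ∈ VQ} N_o(v)⁻¹ < ∞` where `N_o` is the multiplicative
function along paths determined by `Δ`. -/
def IsTreeLattice : Prop :=
  (∀ γ ∈ Λ, IsTreeAut T γ) ∧
  (∀ v : V, Finite {γ : Λ // (γ : Equiv.Perm V) v = v}) ∧
  ∃ (o : VQ Λ) (N : VQ Λ → ℝ),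
    N o = 1 ∧ (∀ v, 0 < N v) ∧
    (∀ e : EQ T Λ, N (headQ T Λ e) = deltaQ T Λ e * N (tailQ T Λ e)) ∧
    Summable (fun v : VQ Λ => (N v)⁻¹)

/-- The transition kernel of the Markov chain associated to `Λ` on the directed edges
of the quotient graph. -/
noncomputable def kerP (e f : EQ T Λ) : ℝ :=
  if headQ T Λ e = tailQ T Λ f then
    (if f = barQ T Λ e then ((indQ T Λ f : ℝ) - 1) else (indQ T Λ f : ℝ)) /
      ((degQ T Λ (headQ T Λ e) : ℝ) - 1)
  else 0

/-- The `n`-step transition kernel. -/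
noncomputable def kerPn : ℕ → EQ T Λ → EQ T Λ → ℝ
  | 0, e, f => if e = f then 1 else 0
  | n + 1, e, f => ∑' g : EQ T Λ, kerPn n e g * kerP T Λ g f

/-- Adjacency in the quotient graph. -/
def AdjQ (u v : VQ Λ) : Prop :=
  ∃ e : EQ T Λ, tailQ T Λ e = u ∧ headQ T Λ e = v

/-- Graph distance on the quotient graph. -/
noncomputable def distQ (u v : VQ Λ) : ℕ :=
  sInf {n : ℕ | ∃ f : ℕ → VQ Λ, f 0 = u ∧ f n = v ∧ ∀ i < n, AdjQ T Λ (f i) (f (i + 1))}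

/-- Distance from a finite set of vertices of the quotient graph. -/
noncomputable def distToF (F : Finset (VQ Λ)) (v : VQ Λ) : ℕ :=
  sInf {n : ℕ | ∃ u ∈ F, distQ T Λ u v = n}

/-- `F` is a finite part for `Λ`: the complement of `F` in the quotient graph is a
disjoint union of finitely many open Nagao rays. -/
def IsFinitePart (F : Finset (VQ Λ)) : Prop :=
  ∃ (k : ℕ) (ray : Fin k → ℕ → VQ Λ),
    (∀ v : VQ Λ, v ∉ F ↔ ∃ i n, ray i n = v) ∧
    (∀ i n j m, ray i n = ray j m → i = j ∧ n = m) ∧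
    (∀ i n, ∃ e : EQ T Λ, tailQ T Λ e = ray i n ∧ headQ T Λ e = ray i (n + 1)) ∧
    (∀ i n, ∀ e f : EQ T Λ, tailQ T Λ e = ray i n → headQ T Λ e = ray i (n + 1) →
      tailQ T Λ f = ray i n → headQ T Λ f = ray i (n + 1) → e = f) ∧
    (∀ i n, ∀ e : EQ T Λ, tailQ T Λ e = ray i n → headQ T Λ e ∉ F →
      headQ T Λ e = ray i (n + 1) ∨ ∃ m, n = m + 1 ∧ headQ T Λ e = ray i m) ∧
    (∀ i n, ∀ e : EQ T Λ, tailQ T Λ e = ray i n → headQ T Λ e = ray i (n + 1) →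
      indQ T Λ e = 1) ∧
    (∀ i n, ∀ e : EQ T Λ, tailQ T Λ e = ray i (n + 1) → headQ T Λ e = ray i n →
      indQ T Λ e = degQ T Λ (ray i n) - 1)

/-- A tree lattice is geometrically finite if its quotient graph contains a nonempty
finite subgraph whose complement is a disjoint union of finitely many open Nagao rays. -/
def IsGeomFinite : Prop := ∃ F : Finset (VQ Λ), F.Nonempty ∧ IsFinitePart T Λ F

/-- The mass that the projection to `VQ` of the uniform measure on the sphere
`S(vb,n)` gives to the vertex `q` of the quotient graph. -/
noncomputable def sphPush (vb : V) (n : ℕ) (q : VQ Λ) : ℝ :=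
  (Nat.card {w : V // T.dist vb w = n ∧ πV Λ w = q} : ℝ) /
    (Nat.card {w : V // T.dist vb w = n} : ℝ)

/-- `ℙ_e(τ = i)` : the probability that the Markov chain started at `e` hits the set of
edges with terminal vertex in `F` for the first time at time `i`. -/
noncomputable def hitP (F : Finset (VQ Λ)) : ℕ → EQ T Λ → ℝ
  | 0, e => if headQ T Λ e ∈ F then 1 else 0
  | i + 1, e => if headQ T Λ e ∈ F then 0 else ∑' f : EQ T Λ, kerP T Λ e f * hitP F i f

/-- `ℙ_e(τ' = i)` where `τ' = min {n | n ≥ τ, 2 ∣ n}`. -/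
noncomputable def hitP' (F : Finset (VQ Λ)) (i : ℕ) (e : EQ T Λ) : ℝ :=
  if 2 ∣ i then hitP T Λ F i e + (if 1 ≤ i then hitP T Λ F (i - 1) e else 0) else 0

/-- `(Ω₀, Ω₁)` is the pair of cyclic classes of the (period two) kernel `P`. -/
def IsCyclicPair (Ω₀ Ω₁ : Set (EQ T Λ)) : Prop :=
  (∀ e, e ∈ Ω₀ ∨ e ∈ Ω₁) ∧ (∀ e, ¬(e ∈ Ω₀ ∧ e ∈ Ω₁)) ∧
  (∀ e ∈ Ω₀, ∀ f, kerP T Λ e f ≠ 0 → f ∈ Ω₁) ∧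
  (∀ e ∈ Ω₁, ∀ f, kerP T Λ e f ≠ 0 → f ∈ Ω₀)

/-- `Ω` is a cyclic class of the kernel `P`. -/
def IsCyclicClass (Ω : Set (EQ T Λ)) : Prop :=
  ∃ Ω', IsCyclicPair T Λ Ω Ω' ∨ IsCyclicPair T Λ Ω' Ω


/-- The auxiliary Markov kernel `P̂` on the vertices of the quotient graph:
`P̂(v,w) = (Σ_{e : ∂₀e = v, ∂₁e = w} ind(e)) / deg(v)`. -/
noncomputable def kerPhat {V : Type*} (T : SimpleGraph V) (Λ : Subgroup (Equiv.Perm V))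
    (v w : VQ Λ) : ℝ :=
  (∑' e : {e : EQ T Λ // tailQ T Λ e = v ∧ headQ T Λ e = w}, (indQ T Λ (e : EQ T Λ) : ℝ)) /
    (degQ T Λ v : ℝ)

section Auxiliary

variable {V : Type*} (T : SimpleGraph V) (Λ : Subgroup (Equiv.Perm V))

lemma vrel_equivalence : Equivalence (vrel Λ) := by
  constructor
  · exact fun x => ⟨1, Λ.one_mem, rfl⟩
  · rintro x y ⟨γ, hγ, h⟩
    exact ⟨γ⁻¹, Λ.inv_mem hγ, by rw [← h]; simp⟩
  · rintro x y z ⟨γ, hγ, h⟩ ⟨δ, hδ, h'⟩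
    exact ⟨δ * γ, Λ.mul_mem hδ hγ, by simp [Equiv.Perm.mul_apply, h, h']⟩

lemma erel_equivalence : Equivalence (erel T Λ) := by
  constructor
  · exact fun x => ⟨1, Λ.one_mem, rfl, rfl⟩
  · rintro x y ⟨γ, hγ, h1, h2⟩
    exact ⟨γ⁻¹, Λ.inv_mem hγ, by rw [← h1]; simp, by rw [← h2]; simp⟩
  · rintro x y z ⟨γ, hγ, h1, h2⟩ ⟨δ, hδ, h1', h2'⟩
    exact ⟨δ * γ, Λ.mul_mem hδ hγ, by simp [Equiv.Perm.mul_apply, h1, h1'],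
      by simp [Equiv.Perm.mul_apply, h2, h2']⟩

lemma πV_eq {a b : V} : πV Λ a = πV Λ b ↔ vrel Λ a b := by
  show Quot.mk (vrel Λ) a = (Quot.mk (vrel Λ) b : Quot (vrel Λ)) ↔ _; rw [Quot.eq]
  exact (vrel_equivalence Λ).eqvGen_iff

lemma πE_eq {a b : DEdge T} : πE T Λ a = πE T Λ b ↔ erel T Λ a b := by
  show Quot.mk (erel T Λ) a = (Quot.mk (erel T Λ) b : Quot (erel T Λ)) ↔ _; rw [Quot.eq]
  exact (erel_equivalence T Λ).eqvGen_iff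

lemma πV_out (q : VQ Λ) : πV Λ (Quot.out q) = q := Quot.out_eq q

lemma πE_out (q : EQ T Λ) : πE T Λ (Quot.out q) = q := Quot.out_eq q

lemma erel_out (d : DEdge T) : erel T Λ (Quot.out (πE T Λ d)) d :=
  (πE_eq T Λ).mp (πE_out T Λ (πE T Λ d))

lemma tailQ_πE (d : DEdge T) : tailQ T Λ (πE T Λ d) = πV Λ d.1.1 := by
  obtain ⟨γ, hγ, h1, h2⟩ := erel_out T Λ d
  exact (πV_eq Λ).mpr ⟨γ, hγ, h1⟩

lemma headQ_πE (d : DEdge T) : headQ T Λ (πE T Λ d) = πV Λ d.1.2 := by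
  obtain ⟨γ, hγ, h1, h2⟩ := erel_out T Λ d
  exact (πV_eq Λ).mpr ⟨γ, hγ, h2⟩

/-- The reversal of a directed edge. -/
def bar' {T : SimpleGraph V} (d : DEdge T) : DEdge T := ⟨(d.1.2, d.1.1), d.2.symm⟩

lemma erel_bar' {d e : DEdge T} (h : erel T Λ d e) :
    erel T Λ (bar' d) (bar' e) := by
  obtain ⟨γ, hγ, h1, h2⟩ := h
  exact ⟨γ, hγ, h2, h1⟩

lemma barQ_πE (d : DEdge T) : barQ T Λ (πE T Λ d) = πE T Λ (bar' d) :=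
  (πE_eq T Λ).mpr (erel_bar' T Λ (erel_out T Λ d))

lemma bar'_bar' (d : DEdge T) : bar' (bar' d) = d := rfl

lemma tailQ_barQ (e : EQ T Λ) : tailQ T Λ (barQ T Λ e) = headQ T Λ e := by
  conv_lhs => rw [← πE_out T Λ e]
  rw [barQ_πE, tailQ_πE]
  rfl

lemma headQ_barQ (e : EQ T Λ) : headQ T Λ (barQ T Λ e) = tailQ T Λ e := by
  conv_lhs => rw [← πE_out T Λ e]
  rw [barQ_πE, headQ_πE]
  rfl

lemma barQ_barQ (e : EQ T Λ) : barQ T Λ (barQ T Λ e) = e := by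
  conv_lhs => rw [← πE_out T Λ e, barQ_πE, barQ_πE, bar'_bar']
  exact πE_out T Λ e

lemma stabV_conj (γ : Equiv.Perm V) (hγ : γ ∈ Λ) (y : V) :
    stabV Λ (γ y) = stabV Λ y := by
  apply Nat.card_congr
  refine ⟨fun d => ⟨⟨γ⁻¹ * (d.1 : Equiv.Perm V) * γ,
      Λ.mul_mem (Λ.mul_mem (Λ.inv_mem hγ) d.1.2) hγ⟩, ?_⟩,
    fun d => ⟨⟨γ * (d.1 : Equiv.Perm V) * γ⁻¹,
      Λ.mul_mem (Λ.mul_mem hγ d.1.2) (Λ.inv_mem hγ)⟩, ?_⟩, ?_, ?_⟩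
  · simp [Equiv.Perm.mul_apply, d.2]
  · simp [Equiv.Perm.mul_apply, d.2]
  · intro d
    apply Subtype.ext; apply Subtype.ext
    show γ * (γ⁻¹ * (d.1 : Equiv.Perm V) * γ) * γ⁻¹ = (d.1 : Equiv.Perm V)
    group
  · intro d
    apply Subtype.ext; apply Subtype.ext
    show γ⁻¹ * (γ * (d.1 : Equiv.Perm V) * γ⁻¹) * γ = (d.1 : Equiv.Perm V)
    group

lemma stabE_conj (γ : Equiv.Perm V) (hγ : γ ∈ Λ) (y z : V) :
    Nat.card {δ : Λ // (δ : Equiv.Perm V) (γ y) = γ y ∧ (δ : Equiv.Perm V) (γ z) = γ z}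
      = Nat.card {δ : Λ // (δ : Equiv.Perm V) y = y ∧ (δ : Equiv.Perm V) z = z} := by
  apply Nat.card_congr
  refine ⟨fun d => ⟨⟨γ⁻¹ * (d.1 : Equiv.Perm V) * γ,
      Λ.mul_mem (Λ.mul_mem (Λ.inv_mem hγ) d.1.2) hγ⟩, ?_, ?_⟩,
    fun d => ⟨⟨γ * (d.1 : Equiv.Perm V) * γ⁻¹,
      Λ.mul_mem (Λ.mul_mem hγ d.1.2) (Λ.inv_mem hγ)⟩, ?_, ?_⟩, ?_, ?_⟩
  · simp [Equiv.Perm.mul_apply, d.2.1]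
  · simp [Equiv.Perm.mul_apply, d.2.2]
  · simp [Equiv.Perm.mul_apply, d.2.1]
  · simp [Equiv.Perm.mul_apply, d.2.2]
  · intro d
    apply Subtype.ext; apply Subtype.ext
    show γ * (γ⁻¹ * (d.1 : Equiv.Perm V) * γ) * γ⁻¹ = (d.1 : Equiv.Perm V)
    group
  · intro d
    apply Subtype.ext; apply Subtype.ext
    show γ⁻¹ * (γ * (d.1 : Equiv.Perm V) * γ⁻¹) * γ = (d.1 : Equiv.Perm V)
    group

/-- The stabilizer of `x` inside `Λ`. -/
noncomputable abbrev Gx (Λ : Subgroup (Equiv.Perm V)) (x : V) : Subgroup Λ :=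
  MulAction.stabilizer Λ x

lemma card_Gx (x : V) : Nat.card (Gx Λ x) = stabV Λ x :=
  Nat.card_congr (Equiv.subtypeEquivRight fun g => MulAction.mem_stabilizer_iff)

lemma finite_Gx (hstab : ∀ v : V, Finite {γ : Λ // (γ : Equiv.Perm V) v = v}) (x : V) :
    Finite (Gx Λ x) := by
  haveI := hstab x
  exact Finite.of_injective
    (fun g : Gx Λ x => (⟨g.1, MulAction.mem_stabilizer_iff.mp g.2⟩ :
      {γ : Λ // (γ : Equiv.Perm V) x = x}))
    fun a b h => Subtype.ext (congrArg Subtype.val h)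

lemma card_stab2 (x u : V) :
    Nat.card (MulAction.stabilizer (Gx Λ x) u)
      = Nat.card {δ : Λ // (δ : Equiv.Perm V) x = x ∧ (δ : Equiv.Perm V) u = u} := by
  apply Nat.card_congr
  refine ⟨fun g => ⟨g.1.1, g.1.2, g.2⟩,
    fun d => ⟨⟨d.1, d.2.1⟩, d.2.2⟩, fun g => rfl, fun d => rfl⟩

lemma perm_inv_eq (σ : Equiv.Perm V) {y z : V} (h : σ y = z) : σ⁻¹ z = y := by
  rw [← h]; simp

lemma card_orbit_stab (x u : V) :
    Nat.card (MulAction.orbit (Gx Λ x) u) * Nat.card (MulAction.stabilizer (Gx Λ x) u)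
      = Nat.card (Gx Λ x) := by
  rw [← Nat.card_prod]
  exact Nat.card_congr (MulAction.orbitProdStabilizerEquivGroup (Gx Λ x) u)

lemma stab2_pos (hstab : ∀ v : V, Finite {γ : Λ // (γ : Equiv.Perm V) v = v}) (x u : V) :
    0 < Nat.card (MulAction.stabilizer (Gx Λ x) u) := by
  haveI : Finite (Gx Λ x) := finite_Gx Λ hstab x
  haveI : Finite (MulAction.stabilizer (Gx Λ x) u) := Subtype.finite
  haveI : Nonempty (MulAction.stabilizer (Gx Λ x) u) := ⟨1⟩
  exact Nat.card_pos

lemma indQ_eq_card_orbit (hstab : ∀ v : V, Finite {γ : Λ // (γ : Equiv.Perm V) v = v})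
    (d : DEdge T) :
    indQ T Λ (πE T Λ d) = Nat.card (MulAction.orbit (Gx Λ d.1.1) d.1.2) := by
  obtain ⟨γ, hγ, h1, h2⟩ := erel_out T Λ d
  have hV : stabV Λ (Quot.out (πE T Λ d)).1.1 = stabV Λ d.1.1 := by
    rw [← h1]; exact (stabV_conj Λ γ hγ _).symm
  have hE : stabE T Λ (Quot.out (πE T Λ d))
      = Nat.card {δ : Λ // (δ : Equiv.Perm V) d.1.1 = d.1.1 ∧
          (δ : Equiv.Perm V) d.1.2 = d.1.2} := by
    rw [stabE, ← h1, ← h2]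
    exact (stabE_conj Λ γ hγ _ _).symm
  rw [indQ, hV, hE, ← card_Gx, ← card_stab2, ← card_orbit_stab]
  exact Nat.mul_div_cancel _ (stab2_pos Λ hstab _ _)

/-- The map from the neighbours of the chosen lift of `w` to the quotient edges with
tail `w`. -/
noncomputable def Phi (w : VQ Λ) (u : T.neighborSet (Quot.out w)) :
    {e : EQ T Λ // tailQ T Λ e = w} :=
  ⟨πE T Λ ⟨(Quot.out w, u.1), u.2⟩, (tailQ_πE T Λ _).trans (πV_out Λ w)⟩

lemma Phi_surjective (hAut : ∀ γ ∈ Λ, IsTreeAut T γ) (w : VQ Λ) :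
    Function.Surjective (Phi T Λ w) := by
  rintro ⟨e, he⟩
  obtain ⟨γ, hγ, hγ1⟩ := (πV_eq Λ).mp (he.trans (πV_out Λ w).symm)
  have hadj : T.Adj (Quot.out w) (γ (Quot.out e).1.2) := by
    have h := ((hAut γ hγ).1 (Quot.out e).1.1 (Quot.out e).1.2).mpr (Quot.out e).2
    rwa [hγ1] at h
  refine ⟨⟨γ (Quot.out e).1.2, hadj⟩, ?_⟩
  apply Subtype.ext
  show πE T Λ _ = e
  conv_rhs => rw [← πE_out T Λ e]
  exact (πE_eq T Λ).mpr ⟨γ⁻¹, Λ.inv_mem hγ, perm_inv_eq γ hγ1, by simp⟩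

lemma orbit_subset_neighbor (hAut : ∀ γ ∈ Λ, IsTreeAut T γ) (x u : V) (hu : T.Adj x u)
    {v : V} (hv : v ∈ MulAction.orbit (Gx Λ x) u) : T.Adj x v := by
  obtain ⟨g, rfl⟩ := MulAction.mem_orbit_iff.mp hv
  have hδ : ((g : Λ) : Equiv.Perm V) ∈ Λ := (g : Λ).2
  have hx : ((g : Λ) : Equiv.Perm V) x = x := MulAction.mem_stabilizer_iff.mp g.2
  have h := ((hAut _ hδ).1 x u).mpr hu
  rw [hx] at h
  exact h

lemma phi_eq_iff_orbit (hAut : ∀ γ ∈ Λ, IsTreeAut T γ) (w : VQ Λ)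
    (a u : T.neighborSet (Quot.out w)) :
    Phi T Λ w u = Phi T Λ w a ↔ u.1 ∈ MulAction.orbit (Gx Λ (Quot.out w)) a.1 := by
  constructor
  · intro h
    have h' := (πE_eq T Λ).mp (congrArg Subtype.val h)
    obtain ⟨δ, hδ, h1, h2⟩ := h'
    refine MulAction.mem_orbit_iff.mpr ⟨(⟨⟨δ, hδ⟩, MulAction.mem_stabilizer_iff.mpr ?_⟩ :
      Gx Λ (Quot.out w))⁻¹, ?_⟩
    · exact h1
    · show δ⁻¹ a.1 = u.1
      exact perm_inv_eq δ h2
  · intro h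
    obtain ⟨g, hg⟩ := MulAction.mem_orbit_iff.mp h
    have hδ : ((g : Λ) : Equiv.Perm V) ∈ Λ := (g : Λ).2
    have hx : ((g : Λ) : Equiv.Perm V) (Quot.out w) = Quot.out w :=
      MulAction.mem_stabilizer_iff.mp g.2
    have hu : ((g : Λ) : Equiv.Perm V) a.1 = u.1 := hg
    apply Subtype.ext
    show πE T Λ _ = πE T Λ _
    refine (πE_eq T Λ).mpr ⟨(((g : Λ) : Equiv.Perm V))⁻¹, Λ.inv_mem hδ, ?_, ?_⟩
    · exact perm_inv_eq _ hx
    · exact perm_inv_eq _ hu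

noncomputable def fiber_equiv_orbit (hAut : ∀ γ ∈ Λ, IsTreeAut T γ) (w : VQ Λ)
    (a : T.neighborSet (Quot.out w)) (e : {e : EQ T Λ // tailQ T Λ e = w})
    (ha : Phi T Λ w a = e) :
    {u : T.neighborSet (Quot.out w) // Phi T Λ w u = e}
      ≃ MulAction.orbit (Gx Λ (Quot.out w)) a.1 := by
  have key : ∀ u : T.neighborSet (Quot.out w),
      Phi T Λ w u = e ↔ u.1 ∈ MulAction.orbit (Gx Λ (Quot.out w)) a.1 := by
    intro u
    rw [← ha]
    exact phi_eq_iff_orbit T Λ hAut w a u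
  exact (Equiv.subtypeEquivRight key).trans
    (Equiv.subtypeSubtypeEquivSubtype
      (fun {v} hv => orbit_subset_neighbor T Λ hAut _ _ a.2 hv))

lemma finite_tail (hAut : ∀ γ ∈ Λ, IsTreeAut T γ)
    (hfin : ∀ x : V, Finite (T.neighborSet x)) (w : VQ Λ) :
    Finite {e : EQ T Λ // tailQ T Λ e = w} := by
  haveI := hfin (Quot.out w)
  exact Finite.of_surjective _ (Phi_surjective T Λ hAut w)

lemma finite_tail_head (hAut : ∀ γ ∈ Λ, IsTreeAut T γ)
    (hfin : ∀ x : V, Finite (T.neighborSet x)) (v w : VQ Λ) :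
    Finite {e : EQ T Λ // tailQ T Λ e = v ∧ headQ T Λ e = w} := by
  haveI := finite_tail T Λ hAut hfin v
  apply Finite.of_injective
    (fun e : {e : EQ T Λ // tailQ T Λ e = v ∧ headQ T Λ e = w} =>
      (⟨e.1, e.2.1⟩ : {e : EQ T Λ // tailQ T Λ e = v}))
  intro a b h
  have h2 : a.1 = b.1 := by simpa using h
  exact Subtype.ext h2

lemma sum_ind_nat (hAut : ∀ γ ∈ Λ, IsTreeAut T γ)
    (hstab : ∀ v : V, Finite {γ : Λ // (γ : Equiv.Perm V) v = v})
    (hfin : ∀ x : V, Finite (T.neighborSet x)) (w : VQ Λ)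
    [Fintype {e : EQ T Λ // tailQ T Λ e = w}] :
    ∑ e : {e : EQ T Λ // tailQ T Λ e = w}, indQ T Λ e.1 = degQ T Λ w := by
  classical
  haveI : Finite (T.neighborSet (Quot.out w)) := hfin (Quot.out w)
  letI : Fintype (T.neighborSet (Quot.out w)) := Fintype.ofFinite _
  have key : ∀ e : {e : EQ T Λ // tailQ T Λ e = w},
      indQ T Λ e.1 = Nat.card {u : T.neighborSet (Quot.out w) // Phi T Λ w u = e} := by
    intro e
    obtain ⟨a, ha⟩ := Phi_surjective T Λ hAut w e
    have he1 : e.1 = πE T Λ ⟨(Quot.out w, a.1), a.2⟩ := by rw [← ha]; rfl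
    rw [he1, indQ_eq_card_orbit T Λ hstab ⟨(Quot.out w, a.1), a.2⟩]
    exact (Nat.card_congr (fiber_equiv_orbit T Λ hAut w a e ha)).symm
  rw [Finset.sum_congr rfl fun e _ => key e]
  have : degQ T Λ w = Nat.card (T.neighborSet (Quot.out w)) := rfl
  rw [this, Nat.card_eq_fintype_card,
    Fintype.card_congr (Equiv.sigmaFiberEquiv (Phi T Λ w)).symm, Fintype.card_sigma]
  refine Finset.sum_congr rfl fun e _ => ?_
  rw [Nat.card_eq_fintype_card]

lemma tsum_fiber_eq {α β : Type*} [Finite α] (h : α → β) (f : α → ℝ) :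
    ∑' b : β, ∑' a : {a : α // h a = b}, f a.1 = ∑' a : α, f a := by
  have hsum : Summable f := Summable.of_finite
  have h2 : Summable fun p : (Σ b : β, {a : α // h a = b}) => f p.2.1 :=
    ((Equiv.sigmaFiberEquiv h).summable_iff).mpr hsum
  rw [← Equiv.tsum_eq (Equiv.sigmaFiberEquiv h) f]
  exact (Summable.tsum_sigma h2).symm

noncomputable def barEquiv (v w : VQ Λ) :
    {e : EQ T Λ // tailQ T Λ e = v ∧ headQ T Λ e = w}
      ≃ {e : EQ T Λ // tailQ T Λ e = w ∧ headQ T Λ e = v} where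
  toFun e := ⟨barQ T Λ e.1,
    by rw [tailQ_barQ]; exact e.2.2, by rw [headQ_barQ]; exact e.2.1⟩
  invFun e := ⟨barQ T Λ e.1,
    by rw [tailQ_barQ]; exact e.2.2, by rw [headQ_barQ]; exact e.2.1⟩
  left_inv e := Subtype.ext (barQ_barQ T Λ e.1)
  right_inv e := Subtype.ext (barQ_barQ T Λ e.1)

lemma flux_eq (N : VQ Λ → ℝ)
    (hrev : ∀ e : EQ T Λ, (indQ T Λ e : ℝ) * (N (tailQ T Λ e))⁻¹
      = (indQ T Λ (barQ T Λ e) : ℝ) * (N (headQ T Λ e))⁻¹) (v w : VQ Λ) :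
    (N v)⁻¹ * (∑' e : {e : EQ T Λ // tailQ T Λ e = v ∧ headQ T Λ e = w},
        (indQ T Λ e.1 : ℝ))
      = (N w)⁻¹ * (∑' e : {e : EQ T Λ // tailQ T Λ e = w ∧ headQ T Λ e = v},
        (indQ T Λ e.1 : ℝ)) := by
  rw [← tsum_mul_left, ← tsum_mul_left,
    ← Equiv.tsum_eq (barEquiv T Λ v w) (fun e => (N w)⁻¹ * (indQ T Λ e.1 : ℝ))]
  apply tsum_congr
  intro e
  have h := hrev e.1
  rw [e.2.1, e.2.2] at h
  rw [mul_comm ((N v)⁻¹) _, mul_comm ((N w)⁻¹) _]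
  exact h

noncomputable def headFiberEquiv (w v : VQ Λ) :
    {a : {e : EQ T Λ // tailQ T Λ e = w} // headQ T Λ a.1 = v}
      ≃ {e : EQ T Λ // tailQ T Λ e = w ∧ headQ T Λ e = v} :=
  ⟨fun a => ⟨a.1.1, a.1.2, a.2⟩, fun e => ⟨⟨e.1, e.2.1⟩, e.2.2⟩,
    fun a => rfl, fun e => rfl⟩

lemma degQ_facts {d₁ d₂ : ℕ} (hd₁ : 3 ≤ d₁) (hd₂ : 3 ≤ d₂)
    (hT : IsBiregularTree T d₁ d₂) (x : V) :
    0 < Nat.card (T.neighborSet x) ∧ Nat.card (T.neighborSet x) ≤ max d₁ d₂ := by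
  obtain ⟨-, -, c, hc, h1, h2⟩ := hT
  cases hcx : c x
  · rw [h2 x hcx]; exact ⟨by omega, le_max_right _ _⟩
  · rw [h1 x hcx]; exact ⟨by omega, le_max_left _ _⟩

end Auxiliary

/-- Lemma 6.1. For a tree lattice, `μ(w) = deg(w)·N_o(w)⁻¹` is a
reversible, stationary measure of finite total mass for the auxiliary chain `P̂` on
`VQ`; in particular `P̂` is positive recurrent. -/
theorem aux_chain_positive_recurrent {V : Type*} (T : SimpleGraph V)
    (d₁ d₂ : ℕ) (hd₁ : 3 ≤ d₁) (hd₂ : 3 ≤ d₂) (hT : IsBiregularTree T d₁ d₂)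
    (Λ : Subgroup (Equiv.Perm V))
    (hAut : ∀ γ ∈ Λ, IsTreeAut T γ)
    (hstab : ∀ v : V, Finite {γ : Λ // (γ : Equiv.Perm V) v = v})
    (o : VQ Λ) (N : VQ Λ → ℝ) (hNo : N o = 1) (hNpos : ∀ v, 0 < N v)
    (hNmul : ∀ e : EQ T Λ, N (headQ T Λ e) = deltaQ T Λ e * N (tailQ T Λ e))
    (hvol : Summable (fun v : VQ Λ => (N v)⁻¹)) :
    (∀ v w : VQ Λ,
      ((degQ T Λ v : ℝ) * (N v)⁻¹) * kerPhat T Λ v w =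
        ((degQ T Λ w : ℝ) * (N w)⁻¹) * kerPhat T Λ w v) ∧
    (∀ w : VQ Λ,
      (∑' v : VQ Λ, ((degQ T Λ v : ℝ) * (N v)⁻¹) * kerPhat T Λ v w) =
        (degQ T Λ w : ℝ) * (N w)⁻¹) ∧
    Summable (fun w : VQ Λ => (degQ T Λ w : ℝ) * (N w)⁻¹) ∧
    ∃ π : VQ Λ → ℝ, (∀ v, 0 ≤ π v) ∧ (∑' v : VQ Λ, π v) = 1 ∧
      ∀ w : VQ Λ, (∑' v : VQ Λ, π v * kerPhat T Λ v w) = π w := by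
  classical
  -- basic positivity and finiteness facts
  have hfin : ∀ x : V, Finite (T.neighborSet x) :=
    fun x => (Nat.card_pos_iff.mp (degQ_facts T hd₁ hd₂ hT x).1).2
  have hdegposN : ∀ v : VQ Λ, 0 < degQ T Λ v :=
    fun v => (degQ_facts T hd₁ hd₂ hT (Quot.out v)).1
  have hdegpos : ∀ v : VQ Λ, 0 < (degQ T Λ v : ℝ) :=
    fun v => by exact_mod_cast hdegposN v
  have hindne : ∀ e : EQ T Λ, (indQ T Λ e : ℝ) ≠ 0 := by
    intro e h0
    have h := hNmul e
    simp only [deltaQ, h0, div_zero, zero_mul] at h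
    exact (hNpos _).ne' h
  have hrev : ∀ e : EQ T Λ, (indQ T Λ e : ℝ) * (N (tailQ T Λ e))⁻¹
      = (indQ T Λ (barQ T Λ e) : ℝ) * (N (headQ T Λ e))⁻¹ := by
    intro e
    have h := hNmul e
    simp only [deltaQ] at h
    have ht := (hNpos (tailQ T Λ e)).ne'
    have hh := (hNpos (headQ T Λ e)).ne'
    have ha := hindne e
    field_simp at h ⊢
    linear_combination h
  -- reversibility
  have h1 : ∀ v w : VQ Λ,
      ((degQ T Λ v : ℝ) * (N v)⁻¹) * kerPhat T Λ v w
        = ((degQ T Λ w : ℝ) * (N w)⁻¹) * kerPhat T Λ w v := by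
    intro v w
    have e1 : ∀ (d n S : ℝ), d ≠ 0 → d * n * (S / d) = n * S := by
      intro d n S hd; field_simp
    simp only [kerPhat]
    rw [e1 _ _ _ (hdegpos v).ne', e1 _ _ _ (hdegpos w).ne']
    exact flux_eq T Λ N hrev v w
  -- rows sum to one
  have hone : ∀ w : VQ Λ, ∑' v : VQ Λ, kerPhat T Λ w v = 1 := by
    intro w
    haveI : Finite {e : EQ T Λ // tailQ T Λ e = w} := finite_tail T Λ hAut hfin w
    letI : Fintype {e : EQ T Λ // tailQ T Λ e = w} := Fintype.ofFinite _
    have htot : ∑' a : {e : EQ T Λ // tailQ T Λ e = w}, (indQ T Λ a.1 : ℝ)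
        = (degQ T Λ w : ℝ) := by
      rw [tsum_fintype, ← Nat.cast_sum, sum_ind_nat T Λ hAut hstab hfin w]
    calc ∑' v : VQ Λ, kerPhat T Λ w v
        = ∑' v : VQ Λ, (∑' a : {a : {e : EQ T Λ // tailQ T Λ e = w} //
            headQ T Λ a.1 = v}, (indQ T Λ a.1.1 : ℝ)) / (degQ T Λ w : ℝ) := by
          refine tsum_congr fun v => ?_
          simp only [kerPhat]
          congr 1
          exact (Equiv.tsum_eq (headFiberEquiv T Λ w v)
            (fun e => (indQ T Λ e.1 : ℝ))).symm
      _ = (∑' v : VQ Λ, ∑' a : {a : {e : EQ T Λ // tailQ T Λ e = w} //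
            headQ T Λ a.1 = v}, (indQ T Λ a.1.1 : ℝ)) / (degQ T Λ w : ℝ) :=
          tsum_div_const
      _ = (∑' a : {e : EQ T Λ // tailQ T Λ e = w}, (indQ T Λ a.1 : ℝ))
            / (degQ T Λ w : ℝ) := by
          rw [tsum_fiber_eq (fun a : {e : EQ T Λ // tailQ T Λ e = w} => headQ T Λ a.1)
            (fun a : {e : EQ T Λ // tailQ T Λ e = w} => (indQ T Λ a.1 : ℝ))]
      _ = 1 := by rw [htot, div_self (hdegpos w).ne']
  -- stationarity
  have h2 : ∀ w : VQ Λ,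
      (∑' v : VQ Λ, ((degQ T Λ v : ℝ) * (N v)⁻¹) * kerPhat T Λ v w)
        = (degQ T Λ w : ℝ) * (N w)⁻¹ := by
    intro w
    calc ∑' v : VQ Λ, ((degQ T Λ v : ℝ) * (N v)⁻¹) * kerPhat T Λ v w
        = ∑' v : VQ Λ, ((degQ T Λ w : ℝ) * (N w)⁻¹) * kerPhat T Λ w v :=
          tsum_congr fun v => h1 v w
      _ = ((degQ T Λ w : ℝ) * (N w)⁻¹) * ∑' v : VQ Λ, kerPhat T Λ w v :=
          tsum_mul_left
      _ = (degQ T Λ w : ℝ) * (N w)⁻¹ := by rw [hone w, mul_one]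
  -- summability
  have hμ0 : ∀ w : VQ Λ, 0 ≤ (degQ T Λ w : ℝ) * (N w)⁻¹ :=
    fun w => mul_nonneg (Nat.cast_nonneg _) (inv_nonneg.mpr (hNpos w).le)
  have h3 : Summable (fun w : VQ Λ => (degQ T Λ w : ℝ) * (N w)⁻¹) := by
    refine Summable.of_nonneg_of_le hμ0 (fun w => ?_)
      (hvol.mul_left ((max d₁ d₂ : ℕ) : ℝ))
    exact mul_le_mul_of_nonneg_right
      (by exact_mod_cast (degQ_facts T hd₁ hd₂ hT (Quot.out w)).2)
      (inv_nonneg.mpr (hNpos w).le)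
  refine ⟨h1, h2, h3, ?_⟩
  -- the normalized stationary probability measure
  have hμpos : 0 < (degQ T Λ o : ℝ) * (N o)⁻¹ :=
    mul_pos (hdegpos o) (inv_pos.mpr (hNpos o))
  have hSpos : 0 < ∑' w : VQ Λ, (degQ T Λ w : ℝ) * (N w)⁻¹ :=
    Summable.tsum_pos h3 hμ0 o hμpos
  refine ⟨fun w => ((degQ T Λ w : ℝ) * (N w)⁻¹)
      / (∑' w : VQ Λ, (degQ T Λ w : ℝ) * (N w)⁻¹),
    fun w => div_nonneg (hμ0 w) hSpos.le, ?_, ?_⟩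
  · rw [tsum_div_const, div_self hSpos.ne']
  · intro w
    have hpt : ∀ v : VQ Λ,
        (((degQ T Λ v : ℝ) * (N v)⁻¹)
          / (∑' w : VQ Λ, (degQ T Λ w : ℝ) * (N w)⁻¹)) * kerPhat T Λ v w
        = (((degQ T Λ v : ℝ) * (N v)⁻¹) * kerPhat T Λ v w)
          / (∑' w : VQ Λ, (degQ T Λ w : ℝ) * (N w)⁻¹) :=
      fun v => div_mul_eq_mul_div _ _ _
    rw [tsum_congr hpt, tsum_div_const, h2 w]

end TreeDyn
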